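/- Let v ∈ V, x ∈ win*_v, F : V → ℝ, and let i, i' ∈ C_x, where C_x = {x} ∪ {j ∈ win⁻_v | next_v(j) = x}. Then cost_F(v,i) − cost_F(v,i') = cost_F(x,i) − cost_F(x,i'). In particular, a minimizer of cost_F(x,·) over C_x is also a minimizer of cost_F(v,·) over C_x. -/

import Mathlib

open Finset
open scoped Classical

noncomputable section

variable {V : Type} [Fintype V] [PartialOrder V]

/-- The chain `T[v,i]` : all vertices `p` with `v ≤ p ≤ i`. -/
def chainCC (v i : V) : Finset V := univ.filter (fun p => v ≤ p ∧ p ≤ i)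

/-- The chain `T[v,i)` : `T[v,i]` without `i`. -/
def chainCO (v i : V) : Finset V := (chainCC v i).erase i

/-- `p` is the parent of `j`. -/
def IsParent (p j : V) : Prop := p < j ∧ ¬ ∃ q, p < q ∧ q < j

/-- `u` is s-maximal in `T_v`. -/
def SMax (s : V → ℝ) (v u : V) : Prop := v ≤ u ∧ ∀ p ∈ chainCO v u, s p < s u

/-- The window of `v`. -/
def win (w : V → ℝ) (w0 : ℝ) (v : V) : Finset V :=
  univ.filter (fun i => v ≤ i ∧ ∑ j ∈ chainCC v i, w j ≤ w0)

/-- `win*_v`: the s-maximal vertices of the window of `v`. -/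
def winStar (w : V → ℝ) (w0 : ℝ) (s : V → ℝ) (v : V) : Finset V :=
  (win w w0 v).filter (fun i => SMax s v i)

/-- `win⁻_v = win_v \ win*_v`. -/
def winMinus (w : V → ℝ) (w0 : ℝ) (s : V → ℝ) (v : V) : Finset V :=
  win w w0 v \ winStar w w0 s v

/-- `next_v(u)`: the greatest (closest to `u`) s-maximal element of `T[v,u)`,
if such a greatest element exists (junk value `v` otherwise). -/
def nxt (s : V → ℝ) (v u : V) : V :=
  if h : ∃ x ∈ chainCO v u, SMax s v x ∧ ∀ y ∈ chainCO v u, SMax s v y → y ≤ x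
  then h.choose else v

/-- The vertices `j` outside `T[v,i]` whose parent lies in `T[v,i]`. -/
def branchOff (v i : V) : Finset V :=
  univ.filter (fun j => j ∉ chainCC v i ∧ ∃ p ∈ chainCC v i, IsParent p j)

/-- `sum_F(v,i) = Σ F(j)` over `j ∉ T[v,i]` whose parent lies in `T[v,i]`. -/
def sumF (F : V → ℝ) (v i : V) : ℝ := ∑ j ∈ branchOff v i, F j

/-- `cost_F(v,i)`: `sum_F(v,i) + s_i` if `i ∈ win*_v`, and
`sum_F(v,i) + s_{next_v(i)}` otherwise (in particular for `i ∈ win⁻_v`). -/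
def costF (w : V → ℝ) (w0 : ℝ) (s : V → ℝ) (F : V → ℝ) (v i : V) : ℝ :=
  if i ∈ winStar w w0 s v then sumF F v i + s i else sumF F v i + s (nxt s v i)

end

/-!
Write `C_x` for the candidate set. Every branch hanging off the path `T[v,i]` either hangs
off `T[x,i]` or off `T[v,x)`, and for `x ≤ i` the latter part does not depend on `i`; so
`sum_F(v,i) - sum_F(x,i)` is a constant. For the cost term, `s`-maximality is transitive
along the path (`x` is `s`-maximal in `T_v`), hence for `i ∈ win⁻_v` with `next_v(i) = x`
also `i ∉ win*_x` and `next_x(i) = x`: both costs use `s_x`. So `cost_F(v,·) - cost_F(x,·)`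
is constant on `C_x`.
-/

section Tree

variable {V : Type} [PartialOrder V]

lemma IsParent.unique (htree : ∀ a b c : V, a ≤ c → b ≤ c → a ≤ b ∨ b ≤ a)
    {p q j : V} (hp : IsParent p j) (hq : IsParent q j) : p = q := by
  rcases htree p q j hp.1.le hq.1.le with hpq | hqp
  · exact hpq.eq_of_not_lt fun h => hp.2 ⟨q, h, hq.1⟩
  · exact (hqp.eq_of_not_lt fun h => hq.2 ⟨p, h, hp.1⟩).symm

variable [Fintype V]

@[simp]
lemma mem_chainCC {v i p : V} : p ∈ chainCC v i ↔ v ≤ p ∧ p ≤ i := by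
  simp [chainCC]

@[simp]
lemma mem_chainCO {v i p : V} : p ∈ chainCO v i ↔ p ≠ i ∧ v ≤ p ∧ p ≤ i := by
  simp [chainCO]

lemma chainCO_self (v : V) : chainCO v v = ∅ := by
  ext p
  simp only [mem_chainCO, Finset.notMem_empty, iff_false]
  exact fun ⟨hne, hvp, hpv⟩ => hne (le_antisymm hpv hvp)

lemma sMax_self (s : V → ℝ) (v : V) : SMax s v v :=
  ⟨le_rfl, by simp [chainCO_self]⟩

lemma nxt_self (s : V → ℝ) (v : V) : nxt s v v = v := by
  simp [nxt, chainCO_self]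

lemma SMax.trans (htree : ∀ a b c : V, a ≤ c → b ≤ c → a ≤ b ∨ b ≤ a)
    {s : V → ℝ} {v x y : V} (hx : SMax s v x) (hy : SMax s x y) : SMax s v y := by
  refine ⟨hx.1.trans hy.1, fun p hp => ?_⟩
  obtain ⟨hpy, hvp, hp_le_y⟩ := mem_chainCO.1 hp
  have hsx : x ≠ y → s x < s y := fun hxy => hy.2 x (mem_chainCO.2 ⟨hxy, le_rfl, hy.1⟩)
  rcases htree p x y hp_le_y hy.1 with hpx | hxp
  · rcases hpx.lt_or_eq with hpx | rfl
    · have hsp : s p < s x := hx.2 p (mem_chainCO.2 ⟨hpx.ne, hvp, hpx.le⟩)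
      rcases eq_or_ne x y with rfl | hxy
      · exact hsp
      · exact hsp.trans (hsx hxy)
    · exact hsx hpy
  · exact hy.2 p (mem_chainCO.2 ⟨hpy, hxp, hp_le_y⟩)

lemma exists_isGreatest_sMax (htree : ∀ a b c : V, a ≤ c → b ≤ c → a ≤ b ∨ b ≤ a)
    {s : V → ℝ} {v i : V} (hvi : v < i) :
    ∃ x, IsGreatest {y | y ∈ chainCO v i ∧ SMax s v y} x := by
  obtain ⟨a, ha⟩ := Set.toFinite {y | y ∈ chainCO v i ∧ SMax s v y} |>.exists_maximal
    ⟨v, mem_chainCO.2 ⟨hvi.ne, le_rfl, hvi.le⟩, sMax_self s v⟩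
  refine ⟨a, ha.prop, fun y hy => ?_⟩
  rcases htree y a i (mem_chainCO.1 hy.1).2.2 (mem_chainCO.1 ha.prop.1).2.2 with hya | hay
  · exact hya
  · exact ha.le_of_ge hy hay

lemma isGreatest_nxt (htree : ∀ a b c : V, a ≤ c → b ≤ c → a ≤ b ∨ b ≤ a)
    {s : V → ℝ} {v i : V} (hvi : v < i) :
    IsGreatest {y | y ∈ chainCO v i ∧ SMax s v y} (nxt s v i) := by
  have hex : ∃ x ∈ chainCO v i, SMax s v x ∧ ∀ y ∈ chainCO v i, SMax s v y → y ≤ x := by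
    obtain ⟨x, ⟨hx, hxs⟩, hub⟩ := exists_isGreatest_sMax htree (s := s) hvi
    exact ⟨x, hx, hxs, fun y hy hys => hub ⟨hy, hys⟩⟩
  obtain ⟨hx, hxs, hub⟩ := (dif_pos hex : nxt s v i = hex.choose) ▸ hex.choose_spec
  exact ⟨⟨hx, hxs⟩, fun y ⟨hy, hys⟩ => hub y hy hys⟩

lemma nxt_nxt (htree : ∀ a b c : V, a ≤ c → b ≤ c → a ≤ b ∨ b ≤ a)
    {s : V → ℝ} {v i : V} (hvi : v < i) : nxt s (nxt s v i) i = nxt s v i := by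
  set x := nxt s v i
  obtain ⟨⟨hx, hxs⟩, hub⟩ := isGreatest_nxt htree (s := s) hvi
  obtain ⟨hxi, -, hx_le_i⟩ := mem_chainCO.1 hx
  have hxi' : x < i := lt_of_le_of_ne hx_le_i hxi
  refine (isGreatest_nxt htree hxi').unique ⟨⟨mem_chainCO.2 ⟨hxi, le_rfl, hx_le_i⟩, sMax_self s x⟩,
    fun y ⟨hy, hys⟩ => hub ⟨?_, hxs.trans htree hys⟩⟩
  obtain ⟨hyi, hxy, hy_le_i⟩ := mem_chainCO.1 hy
  exact mem_chainCO.2 ⟨hyi, (mem_chainCO.1 hx).2.1.trans hxy, hy_le_i⟩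

lemma branchOff_subset {v x : V} (hvx : v ≤ x) (i : V) : branchOff x i ⊆ branchOff v i := by
  intro j hj
  simp only [branchOff, mem_filter, mem_univ, true_and, mem_chainCC] at hj ⊢
  obtain ⟨hj, p, ⟨hxp, hpi⟩, hpar⟩ := hj
  exact ⟨fun ⟨_, hji⟩ => hj ⟨hxp.trans hpar.1.le, hji⟩, p, ⟨hvx.trans hxp, hpi⟩, hpar⟩

lemma mem_branchOff_sdiff (htree : ∀ a b c : V, a ≤ c → b ≤ c → a ≤ b ∨ b ≤ a)
    {v x i j : V} (hxi : x ≤ i) :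
    j ∈ branchOff v i \ branchOff x i ↔ ¬ j ≤ x ∧ ∃ p, v ≤ p ∧ p < x ∧ IsParent p j := by
  simp only [branchOff, mem_sdiff, mem_filter, mem_univ, true_and, mem_chainCC, not_and,
    not_exists]
  constructor
  · rintro ⟨⟨hj, p, ⟨hvp, hpi⟩, hpar⟩, hnot⟩
    have hji : ¬ j ≤ i := fun hji => hj (hvp.trans hpar.1.le) hji
    have hxp : ¬ x ≤ p := fun hxp => hnot (fun _ => hji) p ⟨hxp, hpi⟩ hpar
    refine ⟨fun hjx => hji (hjx.trans hxi), p, hvp, ?_, hpar⟩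
    exact ((htree p x i hpi hxi).resolve_right hxp).lt_of_not_ge hxp
  · rintro ⟨hjx, p, hvp, hpx, hpar⟩
    refine ⟨⟨fun _ hji => ?_, p, ⟨hvp, hpx.le.trans hxi⟩, hpar⟩, fun _ q ⟨hxq, _⟩ hqar => ?_⟩
    · rcases htree j x i hji hxi with hjx' | hxj
      · exact hjx hjx'
      · exact hpar.2 ⟨x, hpx, lt_of_le_of_ne hxj fun h => hjx h.ge⟩
    · exact hpx.not_ge ((hpar.unique htree hqar) ▸ hxq)

lemma sumF_sub_sumF (htree : ∀ a b c : V, a ≤ c → b ≤ c → a ≤ b ∨ b ≤ a)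
    (F : V → ℝ) {v x i : V} (hvx : v ≤ x) (hxi : x ≤ i) :
    sumF F v i - sumF F x i = sumF F v x - sumF F x x := by
  have hsdiff : branchOff v i \ branchOff x i = branchOff v x \ branchOff x x := by
    ext j
    rw [mem_branchOff_sdiff htree hxi, mem_branchOff_sdiff htree le_rfl]
  rw [sumF, sumF, sumF, sumF, ← sum_sdiff_eq_sub (branchOff_subset hvx i),
    ← sum_sdiff_eq_sub (branchOff_subset hvx x), hsdiff]

end Tree

section Cost

variable {V : Type} [Fintype V] [PartialOrder V]

/-- Holds also when `x ∉ win_x`, through the junk value `nxt s x x = x`. -/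
lemma costF_self (w : V → ℝ) (w0 : ℝ) (s F : V → ℝ) (x : V) :
    costF w w0 s F x x = sumF F x x + s x := by
  unfold costF
  split_ifs <;> simp [nxt_self]

lemma costF_sub_costF (htree : ∀ a b c : V, a ≤ c → b ≤ c → a ≤ b ∨ b ≤ a)
    {w : V → ℝ} {w0 : ℝ} {s : V → ℝ} (F : V → ℝ) {v x i : V} (hx : x ∈ winStar w w0 s v)
    (hi : i ∈ insert x ((winMinus w w0 s v).filter (fun j => nxt s v j = x))) :
    costF w w0 s F v i - costF w w0 s F x i = sumF F v x - sumF F x x := by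
  obtain ⟨hxwin, hxs⟩ := mem_filter.1 hx
  have hvx : v ≤ x := (mem_filter.1 hxwin).2.1
  rcases mem_insert.1 hi with rfl | hi
  · rw [costF, if_pos hx, costF_self]
    ring
  obtain ⟨hiwin, hnxt⟩ := mem_filter.1 hi
  obtain ⟨hiwin, hinot⟩ := mem_sdiff.1 hiwin
  have hnot_sMax : ¬ SMax s v i := fun h => hinot (mem_filter.2 ⟨hiwin, h⟩)
  have hvi : v < i :=
    lt_of_le_of_ne (mem_filter.1 hiwin).2.1 fun h => hnot_sMax (h ▸ sMax_self s v)
  have hxi : x ≤ i := (mem_chainCO.1 (hnxt ▸ (isGreatest_nxt htree hvi).1.1)).2.2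
  have hinot_x : i ∉ winStar w w0 s x := fun h => hnot_sMax (hxs.trans htree (mem_filter.1 h).2)
  have hnxt_x : nxt s x i = x := hnxt ▸ nxt_nxt htree hvi
  rw [costF, if_neg hinot, hnxt, costF, if_neg hinot_x, hnxt_x]
  linarith [sumF_sub_sumF htree F hvx hxi]

end Cost

theorem stmt_6_general (V : Type) [Fintype V] [PartialOrder V]
    (htree : ∀ a b c : V, a ≤ c → b ≤ c → a ≤ b ∨ b ≤ a)
    (w : V → ℝ) (s : V → ℝ) (w0 : ℝ)
    (F : V → ℝ)
    (v x : V) (hx : x ∈ winStar w w0 s v)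
    (i i' : V)
    (hi : i ∈ insert x ((winMinus w w0 s v).filter (fun j => nxt s v j = x)))
    (hi' : i' ∈ insert x ((winMinus w w0 s v).filter (fun j => nxt s v j = x))) :
    costF w w0 s F v i - costF w w0 s F v i'
      = costF w w0 s F x i - costF w w0 s F x i' ∧
    ((∀ j ∈ insert x ((winMinus w w0 s v).filter (fun j => nxt s v j = x)),
        costF w w0 s F x i ≤ costF w w0 s F x j) →
      ∀ j ∈ insert x ((winMinus w w0 s v).filter (fun j => nxt s v j = x)),
        costF w w0 s F v i ≤ costF w w0 s F v j) := by
  have hshift := fun j hj => costF_sub_costF htree F hx (i := j) hj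
  refine ⟨by linarith [hshift i hi, hshift i' hi'], fun hmin j hj => ?_⟩
  linarith [hshift i hi, hshift j hj, hmin j hj]

theorem stmt_6 (V : Type) [Fintype V] [Nonempty V] [PartialOrder V]
    (htree : ∀ a b c : V, a ≤ c → b ≤ c → a ≤ b ∨ b ≤ a)
    (w : V → ℝ) (s : V → ℝ) (w0 : ℝ)
    (hw : ∀ i : V, 0 ≤ w i) (hw0 : 0 ≤ w0)
    (F : V → ℝ)
    (v x : V) (hx : x ∈ winStar w w0 s v)
    (i i' : V)
    (hi : i ∈ insert x ((winMinus w w0 s v).filter (fun j => nxt s v j = x)))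
    (hi' : i' ∈ insert x ((winMinus w w0 s v).filter (fun j => nxt s v j = x))) :
    costF w w0 s F v i - costF w w0 s F v i'
      = costF w w0 s F x i - costF w w0 s F x i' ∧
    ((∀ j ∈ insert x ((winMinus w w0 s v).filter (fun j => nxt s v j = x)),
        costF w w0 s F x i ≤ costF w w0 s F x j) →
      ∀ j ∈ insert x ((winMinus w w0 s v).filter (fun j => nxt s v j = x)),
        costF w w0 s F v i ≤ costF w w0 s F v j) :=
  stmt_6_general V htree w s w0 F v x hx i i' hi hi'
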